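/- There exist d ∈ ℕ and a ReLU MLP F : ℚ^d → ℚ^d such that for every natural number x and every y ∈ ℚ with y = rqe(b) for some binary string b, the sequence of iterates of F starting from the initial vector (1, 0, x, y, 0, …, 0) ∈ ℚ^d is eventually constant, and its eventual value has first coordinate equal to 0 and fifth coordinate equal to Σ_{i=1}^x 3·4^{-i} + 4^{-(x+1)} + y·4^{-(x+2)}. -/
import Mathlib


def relu (x : ℚ) : ℚ := max x 0

/-- `IsMLP f` says `f` is computed by a ReLU MLP with rational weights. -/
inductive IsMLP : {din dout : ℕ} → ((Fin din → ℚ) → (Fin dout → ℚ)) → Prop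
  | base {din dout : ℕ} (W : Matrix (Fin dout) (Fin din) ℚ) (b : Fin dout → ℚ) :
      IsMLP (fun x i => relu ((∑ j, W i j * x j) + b i))
  | step {din dmid dout : ℕ} {g : (Fin din → ℚ) → (Fin dmid → ℚ)} (hg : IsMLP g)
      (W : Matrix (Fin dout) (Fin dmid) ℚ) (b : Fin dout → ℚ) :
      IsMLP (fun x i => relu ((∑ j, W i j * g x j) + b i))

/-- A ReLU MLP, packaged with the function it computes. -/
structure MLP (din dout : ℕ) where
  eval : (Fin din → ℚ) → (Fin dout → ℚ)
  isMLP : IsMLP eval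

/-- Rational binary encoding of a binary string. -/
def rbe : List Bool → ℚ
  | [] => 0
  | b :: t => ((if b then 1 else 0) + rbe t) / 2

/-- Rational quaternary encoding of a binary string. -/
def rqe : List Bool → ℚ
  | [] => 0
  | b :: t => ((if b then (3 : ℚ) else 1) + rqe t) / 4

/-- The vector in `ℚ^d` whose first coordinates are the listed values, padded with zeros. -/
def initVec (d : ℕ) (vals : List ℚ) : Fin d → ℚ := fun i => vals.getD (i : ℕ) 0

/- ---------------- auxiliary construction ---------------- -/

def W1 : Matrix (Fin 5) (Fin 5) ℚ :=
  !![0,0,1,0,0; 0,0,1,0,0; 1,0,0,0,0; 0,0,0,1,0; 0,0,0,0,1]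
def b1 : Fin 5 → ℚ := ![0,-1,0,0,0]

def W2 : Matrix (Fin 6) (Fin 5) ℚ :=
  !![0,1,0,0,0; 1,-1,1,0,0; -1,1,1,0,0; -1,1,0,1,0; 1,-1,0,1,0; 0,0,0,0,1]
def b2 : Fin 6 → ℚ := ![0,-1,0,0,-1,0]

def W3 : Matrix (Fin 5) (Fin 6) ℚ :=
  !![0,1/4,0,0,0,0; 0,0,0,0,0,0; 1,0,0,0,0,0; 0,0,0,0,1/4,0; 0,3/4,1/4,1/16,0,1]
def b3 : Fin 5 → ℚ := ![0,0,0,0,0]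

def L1 : (Fin 5 → ℚ) → (Fin 5 → ℚ) := fun x i => relu ((∑ j, W1 i j * x j) + b1 i)
def L2 : (Fin 5 → ℚ) → (Fin 6 → ℚ) := fun x i => relu ((∑ j, W2 i j * L1 x j) + b2 i)
def L3 : (Fin 5 → ℚ) → (Fin 5 → ℚ) := fun x i => relu ((∑ j, W3 i j * L2 x j) + b3 i)

lemma isMLP_L3 : IsMLP L3 := IsMLP.step (IsMLP.step (IsMLP.base W1 b1) W2 b2) W3 b3

lemma step_run (m : ℕ) (u q z t : ℚ) (hq0 : 0 ≤ q) (hq1 : q ≤ 1) (hz0 : 0 ≤ z)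
    (hz1 : z ≤ 1) (ht : 0 ≤ t) :
    L3 ![q, u, (m:ℚ)+1, z, t] = ![q/4, 0, (m:ℚ), z/4, t + 3/4 * q] := by
  have hm : (0:ℚ) ≤ (m:ℚ) := Nat.cast_nonneg m
  have h1 : L1 ![q, u, (m:ℚ)+1, z, t] = ![(m:ℚ)+1, (m:ℚ), q, z, t] := by
    funext i
    fin_cases i <;>
      simp only [L1, W1, b1, Fin.sum_univ_succ, Fin.sum_univ_zero, Matrix.cons_val',
        Matrix.cons_val_zero, Matrix.cons_val_one, Matrix.head_cons, Matrix.cons_val_succ,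
        Matrix.of_apply, Matrix.empty_val', Matrix.cons_val_fin_one, Fin.isValue,
        relu, max_def] <;>
      norm_num <;> (try intro h) <;> (try subst h) <;> (try split_ifs with h2) <;>
      (try subst h2) <;> push_cast at * <;> first | linarith | norm_num
  have h2 : L2 ![q, u, (m:ℚ)+1, z, t] = ![(m:ℚ), q, 0, 0, z, t] := by
    funext i
    simp only [L2, h1]
    fin_cases i <;>
      simp only [W2, b2, Fin.sum_univ_succ, Fin.sum_univ_zero, Matrix.cons_val',
        Matrix.cons_val_zero, Matrix.cons_val_one, Matrix.head_cons, Matrix.cons_val_succ,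
        Matrix.of_apply, Matrix.empty_val', Matrix.cons_val_fin_one, Fin.isValue,
        relu, max_def] <;>
      norm_num <;> (try intro h) <;> (try subst h) <;> (try split_ifs with h2) <;>
      (try subst h2) <;> push_cast at * <;> first | linarith | norm_num
  funext i
  simp only [L3, h2]
  fin_cases i <;>
    simp only [W3, b3, Fin.sum_univ_succ, Fin.sum_univ_zero, Matrix.cons_val',
      Matrix.cons_val_zero, Matrix.cons_val_one, Matrix.head_cons, Matrix.cons_val_succ,
      Matrix.of_apply, Matrix.empty_val', Matrix.cons_val_fin_one, Fin.isValue,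
      relu, max_def] <;>
    norm_num <;> (try intro h) <;> (try subst h) <;> (try split_ifs with h2) <;>
    (try subst h2) <;> push_cast at * <;> first | linarith | norm_num

lemma step_zero (u q z t : ℚ) (hq0 : 0 ≤ q) (hq1 : q ≤ 1) (hz0 : 0 ≤ z)
    (hz1 : z ≤ 1) (ht : 0 ≤ t) :
    L3 ![q, u, 0, z, t] = ![0, 0, 0, 0, t + q/4 + z/16] := by
  have h1 : L1 ![q, u, 0, z, t] = ![0, 0, q, z, t] := by
    funext i
    fin_cases i <;>
      simp only [L1, W1, b1, Fin.sum_univ_succ, Fin.sum_univ_zero, Matrix.cons_val',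
        Matrix.cons_val_zero, Matrix.cons_val_one, Matrix.head_cons, Matrix.cons_val_succ,
        Matrix.of_apply, Matrix.empty_val', Matrix.cons_val_fin_one, Fin.isValue,
        relu, max_def] <;>
      norm_num <;> (try intro h) <;> (try subst h) <;> (try split_ifs with h2) <;>
      (try subst h2) <;> push_cast at * <;> first | linarith | norm_num
  have h2 : L2 ![q, u, 0, z, t] = ![0, 0, q, z, 0, t] := by
    funext i
    simp only [L2, h1]
    fin_cases i <;>
      simp only [W2, b2, Fin.sum_univ_succ, Fin.sum_univ_zero, Matrix.cons_val',
        Matrix.cons_val_zero, Matrix.cons_val_one, Matrix.head_cons, Matrix.cons_val_succ,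
        Matrix.of_apply, Matrix.empty_val', Matrix.cons_val_fin_one, Fin.isValue,
        relu, max_def] <;>
      norm_num <;> (try intro h) <;> (try subst h) <;> (try split_ifs with h2) <;>
      (try subst h2) <;> push_cast at * <;> first | linarith | norm_num
  funext i
  simp only [L3, h2]
  fin_cases i <;>
    simp only [W3, b3, Fin.sum_univ_succ, Fin.sum_univ_zero, Matrix.cons_val',
      Matrix.cons_val_zero, Matrix.cons_val_one, Matrix.head_cons, Matrix.cons_val_succ,
      Matrix.of_apply, Matrix.empty_val', Matrix.cons_val_fin_one, Fin.isValue,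
      relu, max_def] <;>
    norm_num <;> (try intro h) <;> (try subst h) <;> (try split_ifs with h2) <;>
    (try subst h2) <;> push_cast at * <;> first | linarith | norm_num

lemma rqe_nonneg (b : List Bool) : 0 ≤ rqe b := by
  induction b with
  | nil => simp [rqe]
  | cons hd tl ih =>
    simp only [rqe]
    have : (0:ℚ) ≤ (if hd then (3:ℚ) else 1) := by split <;> norm_num
    positivity

lemma rqe_le_one (b : List Bool) : rqe b ≤ 1 := by
  induction b with
  | nil => norm_num [rqe]
  | cons hd tl ih =>
    simp only [rqe]
    have : (if hd then (3:ℚ) else 1) ≤ 3 := by split <;> norm_num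
    linarith

lemma sum_nonneg' (k : ℕ) : 0 ≤ ∑ i ∈ Finset.range k, 3 * ((4:ℚ)⁻¹) ^ (i + 1) := by
  positivity

lemma iter_inv (x : ℕ) (y : ℚ) (hy0 : 0 ≤ y) (hy1 : y ≤ 1) :
    ∀ k, k ≤ x →
      L3^[k] ![1, 0, (x:ℚ), y, 0] =
        ![((4:ℚ)⁻¹)^k, 0, ((x - k : ℕ) : ℚ), y * ((4:ℚ)⁻¹)^k,
          ∑ i ∈ Finset.range k, 3 * ((4:ℚ)⁻¹) ^ (i + 1)] := by
  intro k
  induction k with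
  | zero => intro _; simp
  | succ k ih =>
    intro hk
    have hk' : k ≤ x := by omega
    rw [Function.iterate_succ_apply', ih hk']
    have hq0 : (0:ℚ) ≤ ((4:ℚ)⁻¹)^k := by positivity
    have hq1 : ((4:ℚ)⁻¹)^k ≤ 1 := by
      apply pow_le_one₀ <;> norm_num
    have hz0 : (0:ℚ) ≤ y * ((4:ℚ)⁻¹)^k := by positivity
    have hz1 : y * ((4:ℚ)⁻¹)^k ≤ 1 := by
      calc y * ((4:ℚ)⁻¹)^k ≤ 1 * 1 := by
            apply mul_le_mul hy1 hq1 hq0 (by norm_num)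
        _ = 1 := by norm_num
    have hxk : ((x - k : ℕ) : ℚ) = ((x - (k+1) : ℕ) : ℚ) + 1 := by
      have : x - k = (x - (k+1)) + 1 := by omega
      rw [this]; push_cast; ring
    rw [hxk, step_run (x - (k+1)) 0 (((4:ℚ)⁻¹)^k) (y * ((4:ℚ)⁻¹)^k) _
      hq0 hq1 hz0 hz1 (sum_nonneg' k)]
    have e1 : ((4:ℚ)⁻¹)^k / 4 = ((4:ℚ)⁻¹)^(k+1) := by rw [pow_succ]; ring
    have e2 : y * ((4:ℚ)⁻¹)^k / 4 = y * ((4:ℚ)⁻¹)^(k+1) := by rw [pow_succ]; ring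
    have e3 : (∑ i ∈ Finset.range k, 3 * ((4:ℚ)⁻¹) ^ (i + 1)) + 3/4 * ((4:ℚ)⁻¹)^k =
        ∑ i ∈ Finset.range (k+1), 3 * ((4:ℚ)⁻¹) ^ (i + 1) := by
      rw [Finset.sum_range_succ, pow_succ]; ring
    rw [e1, e2, e3]

lemma initVec_eq (x : ℕ) (y : ℚ) :
    initVec 5 [1, 0, (x:ℚ), y] = ![1, 0, (x:ℚ), y, 0] := by
  funext i
  fin_cases i <;> rfl

/-- There is a recurrent ReLU MLP which, started from
`(1, 0, x, y, 0, …, 0)` with `x ∈ ℕ` and `y = rqe(b)`, eventually stabilizes with first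
coordinate `0` and fifth coordinate `Σ_{i=1}^x 3·4^{-i} + 4^{-(x+1)} + y·4^{-(x+2)}`. -/
theorem mlp_i2qu_translation :
    ∃ (d : ℕ) (hd : 5 ≤ d) (F : MLP d d), ∀ (x : ℕ) (b : List Bool),
      ∃ T : ℕ,
        (∀ t, T ≤ t →
          F.eval^[t] (initVec d [1, 0, (x : ℚ), rqe b]) =
            F.eval^[T] (initVec d [1, 0, (x : ℚ), rqe b])) ∧
        F.eval^[T] (initVec d [1, 0, (x : ℚ), rqe b]) ⟨0, by omega⟩ = 0 ∧
        F.eval^[T] (initVec d [1, 0, (x : ℚ), rqe b]) ⟨4, by omega⟩ =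
          (∑ i ∈ Finset.range x, 3 * ((4 : ℚ)⁻¹) ^ (i + 1)) +
            ((4 : ℚ)⁻¹) ^ (x + 1) + rqe b * ((4 : ℚ)⁻¹) ^ (x + 2) := by
  refine ⟨5, le_refl 5, ⟨L3, isMLP_L3⟩, fun x b => ?_⟩
  have hE : (⟨L3, isMLP_L3⟩ : MLP 5 5).eval = L3 := rfl
  rw [hE]
  set y := rqe b with hy
  have hy0 : 0 ≤ y := rqe_nonneg b
  have hy1 : y ≤ 1 := rqe_le_one b
  set S : ℚ := (∑ i ∈ Finset.range x, 3 * ((4 : ℚ)⁻¹) ^ (i + 1)) +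
      ((4 : ℚ)⁻¹) ^ (x + 1) + y * ((4 : ℚ)⁻¹) ^ (x + 2) with hS
  have hS0 : 0 ≤ S := by
    have := sum_nonneg' x
    have h1 : (0:ℚ) ≤ ((4:ℚ)⁻¹)^(x+1) := by positivity
    have h2 : (0:ℚ) ≤ y * ((4:ℚ)⁻¹)^(x+2) := by positivity
    rw [hS]; linarith
  have hT : L3^[x+1] (initVec 5 [1, 0, (x:ℚ), y]) = ![0, 0, 0, 0, S] := by
    rw [initVec_eq, Function.iterate_succ_apply', iter_inv x y hy0 hy1 x le_rfl]
    have hq0 : (0:ℚ) ≤ ((4:ℚ)⁻¹)^x := by positivity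
    have hq1 : ((4:ℚ)⁻¹)^x ≤ 1 := by apply pow_le_one₀ <;> norm_num
    have hz0 : (0:ℚ) ≤ y * ((4:ℚ)⁻¹)^x := by positivity
    have hz1 : y * ((4:ℚ)⁻¹)^x ≤ 1 := by
      calc y * ((4:ℚ)⁻¹)^x ≤ 1 * 1 := mul_le_mul hy1 hq1 hq0 (by norm_num)
        _ = 1 := by norm_num
    have hxx : ((x - x : ℕ) : ℚ) = 0 := by simp
    rw [hxx, step_zero 0 (((4:ℚ)⁻¹)^x) (y * ((4:ℚ)⁻¹)^x) _ hq0 hq1 hz0 hz1 (sum_nonneg' x)]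
    funext i
    fin_cases i <;> simp [hS, pow_succ] <;> ring
  have hfix : L3 ![0, 0, 0, 0, S] = ![0, 0, 0, 0, S] := by
    have := step_zero 0 0 0 S (le_refl 0) (by norm_num) (le_refl 0) (by norm_num) hS0
    simpa using this
  refine ⟨x + 1, ?_, ?_, ?_⟩
  · intro t ht
    obtain ⟨k, rfl⟩ : ∃ k, t = (x+1) + k := ⟨t - (x+1), by omega⟩
    induction k with
    | zero => rfl
    | succ k ihk =>
      have : (x+1) + (k+1) = ((x+1) + k) + 1 := by omega
      rw [this, Function.iterate_succ_apply', ihk (by omega), hT, hfix]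
  · rw [hT]; rfl
  · rw [hT]; exact hS ▸ rfl
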